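/- Let F be a satisfiable 2-CNF formula, D_F its implication digraph, and x a literal. Then the set L⁺(x) = {y : x ⇝ y} of literals reachable from x contains no two complementary literals; i.e., the literals of L⁺(x) are strictly distinct (lie on distinct variables). -/

import Mathlib

/-- A literal on `n` boolean variables: a variable together with a sign. -/
abbrev Lit (n : ℕ) := Fin n × Bool

/-- Negation of a literal. -/
def Lit.negate {n : ℕ} (x : Lit n) : Lit n := (x.1, !x.2)

/-- The assignment `a` sets the literal `x` true. -/
def SetsTrue {n : ℕ} (a : Fin n → Bool) (x : Lit n) : Prop := a x.1 = x.2

/-- A 2-CNF formula given as a finite set of incompatibilities `(x, y)`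
(each representing the clause `¬x ∨ ¬y`): `a` satisfies the formula iff no
incompatible pair of literals is simultaneously set true. -/
def Satisfies {n : ℕ} (F : Finset (Lit n × Lit n)) (a : Fin n → Bool) : Prop :=
  ∀ q ∈ F, ¬(SetsTrue a q.1 ∧ SetsTrue a q.2)

/-- Each incompatibility involves literals on two distinct variables. -/
def ProperPairs {n : ℕ} (F : Finset (Lit n × Lit n)) : Prop :=
  ∀ q ∈ F, q.1.1 ≠ q.2.1

/-- Edges of the implication digraph `D_F`: each incompatibility `(x, y)`
contributes the edges `x → ¬y` and `y → ¬x`. -/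
def Edge {n : ℕ} (F : Finset (Lit n × Lit n)) (x y : Lit n) : Prop :=
  (x, Lit.negate y) ∈ F ∨ (Lit.negate y, x) ∈ F

/-- Reachability `x ⇝ y` in the implication digraph (directed paths, possibly empty). -/
def Reach {n : ℕ} (F : Finset (Lit n × Lit n)) : Lit n → Lit n → Prop :=
  Relation.ReflTransGen (Edge F)

/-- The strong component of the literal `x` in `D_F`. -/
def StrongComp {n : ℕ} (F : Finset (Lit n × Lit n)) (x : Lit n) : Set (Lit n) :=
  {y | Reach F x y ∧ Reach F y x}

/-- The literal `x` lies in a splitting pair: its strong component is nontrivial and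
the components `C(x)` and `C(¬x)` are incomparable in the reachability order. -/
def SplittingPairAt {n : ℕ} (F : Finset (Lit n × Lit n)) (x : Lit n) : Prop :=
  (∃ y, y ≠ x ∧ y ∈ StrongComp F x) ∧
    ¬Reach F x (Lit.negate x) ∧ ¬Reach F (Lit.negate x) x

/-- The graph on satisfying assignments of `F`: vertices are satisfying assignments,
edges join assignments differing at exactly one variable (single-variable flips). -/
def SatGraph {n : ℕ} (F : Finset (Lit n × Lit n)) :
    SimpleGraph {a : Fin n → Bool // Satisfies F a} where
  Adj a b := ∃ i, a.1 i ≠ b.1 i ∧ ∀ j, j ≠ i → a.1 j = b.1 j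
  symm := by
    constructor
    rintro a b ⟨i, h1, h2⟩
    exact ⟨i, fun h => h1 h.symm, fun j hj => (h2 j hj).symm⟩
  loopless := by
    constructor
    rintro a ⟨i, h1, _⟩
    exact h1 rfl

lemma Lit.negate_negate {n : ℕ} (a : Lit n) : Lit.negate (Lit.negate a) = a := by
  simp [Lit.negate]

lemma edge_skew {n : ℕ} (F : Finset (Lit n × Lit n)) {a b : Lit n}
    (h : Edge F a b) : Edge F (Lit.negate b) (Lit.negate a) := by
  rcases h with h | h
  · exact Or.inr (by rwa [Lit.negate_negate])
  · exact Or.inl (by rwa [Lit.negate_negate])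

lemma reach_skew {n : ℕ} (F : Finset (Lit n × Lit n)) {a b : Lit n}
    (h : Reach F a b) : Reach F (Lit.negate b) (Lit.negate a) := by
  induction h with
  | refl => exact .refl
  | tail _ he ih => exact .trans (.single (edge_skew F he)) ih

/-- If `F` is satisfiable and the literal `x` does not reach its negation, then the
literals of `L⁺(x) = {y : x ⇝ y}` are strictly distinct: no two distinct reachable
literals lie on the same variable (in particular no complementary pair occurs). -/
theorem out_set_strictly_distinct {n : ℕ} (F : Finset (Lit n × Lit n))
    (hF : ProperPairs F) (hsat : ∃ a, Satisfies F a)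
    (x : Lit n) (hx : ¬Reach F x (Lit.negate x)) :
    ∀ y z : Lit n, Reach F x y → Reach F x z → y ≠ z → y.1 ≠ z.1 := by
  rintro ⟨v, s⟩ ⟨w, t⟩ hy hz hne rfl
  have hst : s ≠ t := fun h => hne (by rw [h])
  have ht : t = !s := by
    cases s <;> cases t <;> simp_all
  rw [show ((v, s).1, t) = Lit.negate (v, s) by simp [Lit.negate, ht]] at hz
  exact hx (hz.trans (by simpa [Reach] using reach_skew F hy))
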